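/- Let T_{4,7} be the rooted tree in which the root has 4 children, every other non-leaf vertex has degree 4 (i.e., 3 children), and all leaves are at distance 6 from the root. Then for every positive integer k, the Thue chromatic number π(T_{4,7}[E_k]) = 4k. -/

import Mathlib

/-- The lexicographic product `G[H]` of two simple graphs. -/
def lexProd {V W : Type*} (G : SimpleGraph V) (H : SimpleGraph W) : SimpleGraph (V × W) where
  Adj x y := G.Adj x.1 y.1 ∨ (x.1 = y.1 ∧ H.Adj x.2 y.2)
  symm := by
    constructor
    rintro ⟨a, b⟩ ⟨a', b'⟩ (h | ⟨h1, h2⟩)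
    · exact Or.inl h.symm
    · exact Or.inr ⟨h1.symm, h2.symm⟩
  loopless := by
    constructor
    rintro ⟨a, b⟩ (h | ⟨_, h2⟩)
    · exact (G.ne_of_adj h) rfl
    · exact (H.ne_of_adj h2) rfl

/-- A coloring `c` of a graph `G` is nonrepetitive if there is no path
`v₁ v₂ … v_{2l}` (pairwise distinct vertices, consecutive ones adjacent) with
`c vᵢ = c v_{l+i}` for all `1 ≤ i ≤ l`. -/
def IsNonrepetitive {V α : Type*} (G : SimpleGraph V) (c : V → α) : Prop :=
  ∀ l : ℕ, 0 < l → ∀ f : ℕ → V,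
    (∀ i j, i < 2 * l → j < 2 * l → f i = f j → i = j) →
    (∀ i, i + 1 < 2 * l → G.Adj (f i) (f (i + 1))) →
    ¬ (∀ i, i < l → c (f i) = c (f (i + l)))

/-- The Thue chromatic number: least number of colors in a nonrepetitive coloring. -/
noncomputable def thueNumber {V : Type*} (G : SimpleGraph V) : ℕ :=
  sInf {n : ℕ | ∃ c : V → Fin n, IsNonrepetitive G c}

/-- The rainbow Thue chromatic number of `G[H]`: least number of colors in a
nonrepetitive coloring of `G[H]` in which every layer is rainbow colored. -/
noncomputable def rainbowThueNumber {V W : Type*} (G : SimpleGraph V) (H : SimpleGraph W) : ℕ :=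
  sInf {n : ℕ | ∃ c : V × W → Fin n, IsNonrepetitive (lexProd G H) c ∧
    ∀ v : V, Function.Injective fun w : W => c (v, w)}

/-!
Upper bound: color `(v, i)` by the depth of `v` modulo 4 together with `i`. The depths along a
repetitive path move by ±1, stay in `[0, 6]` and agree mod 4 on the two halves, which forces the
two halves to have equal depths. The path then runs between two distinct vertices of the same
depth without rising above them, which is impossible in a tree.

Lower bound: with fewer than `4k` colors, a vertex of degree 4 has a rainbow layer (otherwise its
four neighbours would need pairwise disjoint rainbow layers), and two children of the root share
a color. If siblings `v, v'` with parent `p` share a color, the path `x v p v'` shows that the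
children `x` of `v` avoid the colors of `p`; counting then makes two of them share a color again.
Following such a branch from the root down to depth 5, the layers of vertices three apart meet,
which yields a repetitively colored path on six vertices.
-/

namespace IsNonrepetitive

variable {V α β : Type*} {G : SimpleGraph V} {c : V → α}

theorem comp_injective (hc : IsNonrepetitive G c) {g : α → β} (hg : g.Injective) :
    IsNonrepetitive G (g ∘ c) :=
  fun l hl f hinj hadj hrep => hc l hl f hinj hadj fun i hi => hg (hrep i hi)

theorem map_ne_map (hc : IsNonrepetitive G c) {p q : List V} (hp : p ≠ [])
    (hpq : p.length = q.length) (hnd : (p ++ q).Nodup) (hch : (p ++ q).IsChain G.Adj) :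
    p.map c ≠ q.map c := by
  intro hmap
  have hlen : (p ++ q).length = 2 * p.length := by rw [List.length_append, ← hpq, two_mul]
  refine hc p.length (List.length_pos_of_ne_nil hp) (fun i => (p ++ q).getD i (p.head hp)) ?_ ?_ ?_
  · intro i j hi hj hij
    rw [← hlen] at hi hj
    rw [List.getD_eq_getElem _ _ hi, List.getD_eq_getElem _ _ hj] at hij
    exact hnd.getElem_inj_iff.1 hij
  · intro i hi
    rw [← hlen] at hi
    rw [List.getD_eq_getElem _ _ hi, List.getD_eq_getElem _ _ (by omega)]
    exact List.isChain_iff_getElem.1 hch i hi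
  · intro i hi
    have hq : i < q.length := hpq ▸ hi
    have h := congrArg (·[i]?) hmap
    simp only [List.getElem?_map, List.getElem?_eq_getElem hi, List.getElem?_eq_getElem hq,
      Option.map_some, Option.some.injEq] at h
    rw [List.getD_eq_getElem _ _ (by omega), List.getD_eq_getElem _ _ (by omega),
      List.getElem_append_left hi, List.getElem_append_right (by omega)]
    simpa using h

end IsNonrepetitive

@[simp]
theorem lexProd_bot_adj {V W : Type*} {G : SimpleGraph V} {x y : V × W} :
    (lexProd G ⊥).Adj x y ↔ G.Adj x.1 y.1 := by
  simp [lexProd]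

namespace SimpleGraph.Connected

variable {V : Type*} {G : SimpleGraph V} {r : V}

theorem exists_adj_dist_add_one_eq (hG : G.Connected) {v : V} (hv : v ≠ r) :
    ∃ y, G.Adj v y ∧ G.dist r y + 1 = G.dist r v := by
  obtain ⟨p, hlen⟩ := (hG v r).exists_walk_length_eq_dist
  cases p with
  | nil => exact absurd rfl hv
  | @cons _ y _ h q =>
    refine ⟨y, h, ?_⟩
    have htri := hG.dist_triangle (u := v) (v := y) (w := r)
    rw [dist_eq_one_iff_adj.2 h] at htri
    have := dist_le q
    rw [Walk.length_cons] at hlen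
    rw [dist_comm, dist_comm (u := r)]
    omega

end SimpleGraph.Connected

namespace SimpleGraph.IsTree

variable {V : Type*} {T : SimpleGraph V} {r : V}

theorem eq_of_adj_of_dist_add_one_eq (hT : T.IsTree) {v y₁ y₂ : V} (h₁ : T.Adj y₁ v)
    (h₂ : T.Adj y₂ v) (hd₁ : T.dist r y₁ + 1 = T.dist r v) (hd₂ : T.dist r y₂ + 1 = T.dist r v) :
    y₁ = y₂ := by
  obtain ⟨p₁, hp₁⟩ := (hT.connected r y₁).exists_walk_length_eq_dist
  obtain ⟨p₂, hp₂⟩ := (hT.connected r y₂).exists_walk_length_eq_dist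
  have hgeo₁ : (p₁.concat h₁).IsPath := Walk.isPath_of_length_eq_dist _ (by simp [hp₁, hd₁])
  have hgeo₂ : (p₂.concat h₂).IsPath := Walk.isPath_of_length_eq_dist _ (by simp [hp₂, hd₂])
  have := (hT.isAcyclic.subsingleton_path r v).elim ⟨_, hgeo₁⟩ ⟨_, hgeo₂⟩
  exact (Walk.concat_inj (congrArg Subtype.val this)).1

theorem dist_add_one_eq_of_adj_of_ne (hT : T.IsTree) {p v x : V} (hpv : T.Adj p v)
    (hp : T.dist r p + 1 = T.dist r v) (hvx : T.Adj v x) (hxp : x ≠ p) :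
    T.dist r v + 1 = T.dist r x := by
  rcases hT.dist_eq_dist_add_one_of_adj r hvx with h | h
  · exact absurd (hT.eq_of_adj_of_dist_add_one_eq hvx.symm hpv h.symm hp) hxp
  · exact h.symm

theorem not_adj_of_dist_add_two_eq (hT : T.IsTree) {x y : V}
    (h : T.dist r x + 2 = T.dist r y) : ¬T.Adj x y := fun hxy => by
  rcases hT.dist_eq_dist_add_one_of_adj r hxy with h' | h' <;> omega

theorem dist_eq_add_dist_of_adj (hT : T.IsTree) {x y z : V}
    (hy : T.dist r y = T.dist r x + T.dist x y) (hyz : T.Adj y z)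
    (hz : T.dist r x ≤ T.dist r z) : T.dist r z = T.dist r x + T.dist x z := by
  have htri : ∀ w, T.dist r w ≤ T.dist r x + T.dist x w := fun w => hT.connected.dist_triangle
  have htoward : ∀ w, T.Adj y w → T.dist x w + 1 = T.dist x y →
      T.dist r w = T.dist r x + T.dist x w := fun w hw hxw => by
    have := htri w
    rcases hT.dist_eq_dist_add_one_of_adj r hw with h | h <;> omega
  rcases hT.dist_eq_dist_add_one_of_adj x hyz with h | h
  · exact htoward z hyz h.symm
  refine (hT.dist_eq_dist_add_one_of_adj r hyz).elim (fun h' => ?_) (fun h' => by omega)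
  -- `z` is the parent of `y`; but so is the neighbour of `y` towards `x`, which lies below `x`
  have hyx : y ≠ x := by rintro rfl; omega
  obtain ⟨y', hyy', hy'⟩ := hT.connected.exists_adj_dist_add_one_eq (r := x) hyx
  have hry' := htoward y' hyy' hy'
  obtain rfl : y' = z :=
    hT.eq_of_adj_of_dist_add_one_eq (r := r) hyy'.symm hyz.symm (by omega) h'.symm
  omega

theorem dist_eq_add_dist_of_walk (hT : T.IsTree) (w : ℕ → V) (n : ℕ)
    (hadj : ∀ j < n, T.Adj (w j) (w (j + 1)))
    (hdepth : ∀ j ≤ n, T.dist r (w 0) ≤ T.dist r (w j)) :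
    T.dist r (w n) = T.dist r (w 0) + T.dist (w 0) (w n) := by
  induction n with
  | zero => simp
  | succ n ih =>
    exact hT.dist_eq_add_dist_of_adj (ih (fun j hj => hadj j (by omega))
      (fun j hj => hdepth j (by omega))) (hadj n (by omega)) (hdepth _ le_rfl)

end SimpleGraph.IsTree

/-- The gap `d (i + l) - d i` can only be `-4`, `0` or `4`; it cannot jump between these values
in one step, and `±4` is ruled out at the seam between the two halves. -/
theorem add_eq_of_mod_four_eq {d : ℕ → ℕ} {l : ℕ} (hl : 0 < l) (hd : ∀ i, d i ≤ 6)
    (hstep : ∀ i, i + 1 < 2 * l → d i = d (i + 1) + 1 ∨ d (i + 1) = d i + 1)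
    (hmod : ∀ i < l, d i % 4 = d (i + l) % 4) : ∀ i < l, d (i + l) = d i := by
  have hgap : ∀ i < l, d (i + l) + d 0 = d i + d l := by
    intro i
    induction i with
    | zero => simp [add_comm]
    | succ i ih =>
      intro hi
      have hmod' := hmod (i + 1) hi
      rw [Nat.add_right_comm] at hmod' ⊢
      have := ih (by omega)
      have := hmod i (by omega)
      have := hstep i (by omega)
      have := hstep (i + l) (by omega)
      have := hd i; have := hd (i + 1); have := hd (i + l); have := hd (i + l + 1)
      omega
  have hseam : d l = d 0 := by
    obtain ⟨s, rfl⟩ : ∃ s, l = s + 1 := ⟨l - 1, by omega⟩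
    have := hstep s (by omega)
    have := hgap s (by omega)
    have := hmod 0 hl
    rw [zero_add] at this
    have := hd 0; have := hd s; have := hd (s + 1); have := hd (s + (s + 1))
    omega
  intro i hi
  have := hgap i hi
  omega

section DepthColoring

variable {V : Type*} (T : SimpleGraph V) (r : V) (k : ℕ)

noncomputable def depthColoring (x : V × Fin k) : Fin 4 × Fin k :=
  (Fin.ofNat 4 (T.dist r x.1), x.2)

variable {T r k}

theorem isNonrepetitive_depthColoring (hT : T.IsTree) (hdepth : ∀ v, T.dist r v ≤ 6) :
    IsNonrepetitive (lexProd T ⊥) (depthColoring T r k) := by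
  intro l hl f hinj hadj hrep
  set d : ℕ → ℕ := fun i => T.dist r (f i).1
  have hTadj : ∀ i, i + 1 < 2 * l → T.Adj (f i).1 (f (i + 1)).1 :=
    fun i hi => lexProd_bot_adj.1 (hadj i hi)
  have hcol : ∀ i < l, d i % 4 = d (i + l) % 4 ∧ (f i).2 = (f (i + l)).2 := by
    intro i hi
    obtain ⟨h₁, h₂⟩ := Prod.mk.inj (hrep i hi)
    exact ⟨by simpa [Fin.val_ofNat] using congrArg Fin.val h₁, h₂⟩
  have hper := add_eq_of_mod_four_eq hl (fun i => hdepth _)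
    (fun i hi => hT.dist_eq_dist_add_one_of_adj r (hTadj i hi)) (fun i hi => (hcol i hi).1)
  obtain ⟨p, hp, hmin⟩ := (Finset.range l).exists_min_image d ⟨0, Finset.mem_range.2 hl⟩
  rw [Finset.mem_range] at hp
  -- the walk from `f p` to `f (p + l)` never rises above its start, so it stays in its subtree
  have hsub := hT.dist_eq_add_dist_of_walk (r := r) (fun j => (f (p + j)).1) l
    (fun j hj => hTadj (p + j) (by omega)) (fun j hj => by
      rcases Nat.lt_or_ge (p + j) l with h | h
      · exact hmin _ (Finset.mem_range.2 h)
      · have := hper (p + j - l) (by omega)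
        rw [Nat.sub_add_cancel h] at this
        exact this ▸ hmin _ (Finset.mem_range.2 (by omega)))
  have hsame : (f p).1 = (f (p + l)).1 := by
    simp only [add_zero, hper p hp] at hsub
    exact (hT.connected.dist_eq_zero_iff).1 (by omega)
  have := hinj p (p + l) (by omega) (by omega) (Prod.ext hsame (hcol p hp).2)
  omega

end DepthColoring

theorem Finset.exists_ne_not_disjoint_of_card_lt {ι α : Type*} [DecidableEq α] [Fintype α]
    {F : Finset ι} {S : ι → Finset α} {u : Finset α} {k : ℕ} (hS : ∀ i ∈ F, (S i).card = k)
    (hu : ∀ i ∈ F, Disjoint (S i) u) (h : Fintype.card α < F.card * k + u.card) :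
    ∃ i ∈ F, ∃ j ∈ F, i ≠ j ∧ ¬Disjoint (S i) (S j) := by
  by_contra! hdisj
  have hcard : (F.biUnion S ∪ u).card = F.card * k + u.card := by
    rw [Finset.card_union_of_disjoint ((Finset.disjoint_biUnion_left _ _ _).2 hu),
      Finset.card_biUnion hdisj, Finset.sum_const_nat hS]
  exact h.not_ge (hcard ▸ Finset.card_le_univ _)

theorem Finset.not_disjoint_of_card_lt {α : Type*} [DecidableEq α] [Fintype α]
    {s t u : Finset α} (hs : Disjoint s u) (ht : Disjoint t u)
    (h : Fintype.card α < s.card + t.card + u.card) : ¬Disjoint s t := by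
  intro hst
  have hcard : (s ∪ t ∪ u).card = s.card + t.card + u.card := by
    rw [Finset.card_union_of_disjoint (Finset.disjoint_union_left.2 ⟨hs, ht⟩),
      Finset.card_union_of_disjoint hst]
  exact h.not_ge (hcard ▸ Finset.card_le_univ _)

section Layer

variable {V α : Type*} {k : ℕ}

def IsRainbowLayer (c : V × Fin k → α) (v : V) : Prop :=
  Function.Injective fun i => c (v, i)

theorem exists_ne_of_not_isRainbowLayer {c : V × Fin k → α} {v : V}
    (h : ¬IsRainbowLayer c v) : ∃ i j, i ≠ j ∧ c (v, i) = c (v, j) := by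
  unfold IsRainbowLayer Function.Injective at h
  push Not at h
  obtain ⟨i, j, hij, hne⟩ := h
  exact ⟨i, j, hne, hij⟩

variable [DecidableEq α]

def layer (c : V × Fin k → α) (v : V) : Finset α :=
  Finset.univ.image fun i => c (v, i)

def SharesColorWithSibling (T : SimpleGraph V) (c : V × Fin k → α) (p v : V) : Prop :=
  ∃ v', T.Adj p v' ∧ v' ≠ v ∧ ¬Disjoint (layer c v) (layer c v')

variable {c : V × Fin k → α} {v : V}

@[simp]
theorem mem_layer {a : α} : a ∈ layer c v ↔ ∃ i, c (v, i) = a := by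
  simp [layer]

theorem IsRainbowLayer.card_layer (h : IsRainbowLayer c v) : (layer c v).card = k := by
  rw [layer, Finset.card_image_of_injective _ h, Finset.card_univ, Fintype.card_fin]

end Layer

namespace IsNonrepetitive

variable {V α : Type*} {k : ℕ} {T : SimpleGraph V} {c : V × Fin k → α}

theorem isRainbowLayer_of_adj (hc : IsNonrepetitive (lexProd T ⊥) c) {u v : V}
    (huv : T.Adj u v) (hu : ¬IsRainbowLayer c u) : IsRainbowLayer c v := by
  by_contra hv
  obtain ⟨i, j, hij, hi⟩ := exists_ne_of_not_isRainbowLayer hu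
  obtain ⟨a, b, hab, ha⟩ := exists_ne_of_not_isRainbowLayer hv
  exact hc.map_ne_map (p := [(u, i), (v, a)]) (q := [(u, j), (v, b)]) (by simp) rfl
    (by simp [huv.ne, huv.ne', hij, hab]) (by simp [huv, huv.symm]) (by simp [hi, ha])

variable [DecidableEq α]

theorem disjoint_layer_of_adj (hc : IsNonrepetitive (lexProd T ⊥) c) {u v : V}
    (huv : T.Adj u v) : Disjoint (layer c u) (layer c v) := by
  refine Finset.disjoint_left.2 fun _ hu hv => ?_
  obtain ⟨i, rfl⟩ := mem_layer.1 hu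
  obtain ⟨j, hj⟩ := mem_layer.1 hv
  exact hc.map_ne_map (p := [(u, i)]) (q := [(v, j)]) (by simp) rfl (by simp [huv.ne])
    (by simp [huv]) (by simp [hj])

theorem disjoint_layer_of_not_isRainbowLayer (hc : IsNonrepetitive (lexProd T ⊥) c) {v u w : V}
    (hvu : T.Adj v u) (hvw : T.Adj v w) (huw : u ≠ w) (hv : ¬IsRainbowLayer c v) :
    Disjoint (layer c u) (layer c w) := by
  refine Finset.disjoint_left.2 fun _ hu hw => ?_
  obtain ⟨i, rfl⟩ := mem_layer.1 hu
  obtain ⟨j, hj⟩ := mem_layer.1 hw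
  obtain ⟨a, b, hab, ha⟩ := exists_ne_of_not_isRainbowLayer hv
  exact hc.map_ne_map (p := [(u, i), (v, a)]) (q := [(w, j), (v, b)]) (by simp) rfl
    (by simp [hvu.ne', hvw.ne, hvw.ne', huw, hab]) (by simp [hvu.symm, hvw, hvw.symm])
    (by simp [hj, ha])

/-- Otherwise the path `x v p v'` would be colored repetitively. -/
theorem disjoint_layer_of_sharesColorWithSibling (hc : IsNonrepetitive (lexProd T ⊥) c)
    {p v x : V} (hs : SharesColorWithSibling T c p v) (hpv : T.Adj p v) (hvx : T.Adj v x)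
    (hxp : x ≠ p) (hpx : ¬T.Adj p x) : Disjoint (layer c x) (layer c p) := by
  obtain ⟨v', hpv', hv'v, hshare⟩ := hs
  obtain ⟨_, hv, hv'⟩ := Finset.not_disjoint_iff.1 hshare
  obtain ⟨a, rfl⟩ := mem_layer.1 hv
  obtain ⟨a', ha'⟩ := mem_layer.1 hv'
  have hxv' : x ≠ v' := by rintro rfl; exact hpx hpv'
  refine Finset.disjoint_left.2 fun _ hx hp => ?_
  obtain ⟨i, rfl⟩ := mem_layer.1 hx
  obtain ⟨j, hj⟩ := mem_layer.1 hp
  exact hc.map_ne_map (p := [(x, i), (v, a)]) (q := [(p, j), (v', a')]) (by simp) rfl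
    (by simp [hvx.ne', hxp, hxv', hpv.ne', hv'v.symm, hpv'.ne])
    (by simp [hvx.symm, hpv.symm, hpv']) (by simp [hj, ha'])

variable [Fintype α]

theorem isRainbowLayer_of_card_lt (hc : IsNonrepetitive (lexProd T ⊥) c)
    [DecidableEq V] {v : V} [Fintype (T.neighborSet v)]
    (h : Fintype.card α < T.degree v * k) : IsRainbowLayer c v := by
  by_contra hv
  obtain ⟨u, hu, w, hw, huw, hshare⟩ := Finset.exists_ne_not_disjoint_of_card_lt
    (F := T.neighborFinset v) (S := layer c) (u := ∅)
    (fun u hu => (hc.isRainbowLayer_of_adj ((T.mem_neighborFinset v u).1 hu) hv).card_layer)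
    (fun _ _ => Finset.disjoint_empty_right _) (by simpa using h)
  rw [SimpleGraph.mem_neighborFinset] at hu hw
  exact hshare (hc.disjoint_layer_of_not_isRainbowLayer hu hw huw hv)


theorem exists_adj_sharesColorWithSibling (hc : IsNonrepetitive (lexProd T ⊥) c)
    (hα : Fintype.card α < 4 * k) {p : V} [Fintype (T.neighborSet p)] (hdeg : T.degree p = 4)
    (hp : IsRainbowLayer c p) (hrain : ∀ v, T.Adj p v → IsRainbowLayer c v) :
    ∃ v, T.Adj p v ∧ SharesColorWithSibling T c p v := by
  obtain ⟨v, hv, v', hv', hvv', hshare⟩ := Finset.exists_ne_not_disjoint_of_card_lt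
    (F := T.neighborFinset p) (S := layer c) (u := layer c p)
    (fun v hv => (hrain v ((T.mem_neighborFinset p v).1 hv)).card_layer)
    (fun v hv => (hc.disjoint_layer_of_adj ((T.mem_neighborFinset p v).1 hv)).symm)
    (by rw [T.card_neighborFinset_eq_degree, hdeg, hp.card_layer]; omega)
  rw [SimpleGraph.mem_neighborFinset] at hv hv'
  exact ⟨v, hv, v', hv', hvv'.symm, hshare⟩

theorem exists_adj_sharesColorWithSibling_of_parent [DecidableEq V]
    (hc : IsNonrepetitive (lexProd T ⊥) c) (hT : T.IsTree) (hα : Fintype.card α < 4 * k)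
    {r p v : V} [Fintype (T.neighborSet v)]
    (hpv : T.Adj p v) (hdv : T.dist r p + 1 = T.dist r v) (hs : SharesColorWithSibling T c p v)
    (hdeg : T.degree v = 4) (hv : IsRainbowLayer c v)
    (hrain : ∀ x, T.Adj v x → IsRainbowLayer c x) :
    ∃ x, T.Adj v x ∧ T.dist r v + 1 = T.dist r x ∧ SharesColorWithSibling T c v x := by
  have hchild : ∀ x ∈ (T.neighborFinset v).erase p,
      T.Adj v x ∧ T.dist r v + 1 = T.dist r x ∧ x ≠ p := fun x hx => by
    obtain ⟨hxp, hvx⟩ := Finset.mem_erase.1 hx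
    rw [SimpleGraph.mem_neighborFinset] at hvx
    exact ⟨hvx, hT.dist_add_one_eq_of_adj_of_ne hpv hdv hvx hxp, hxp⟩
  have hdisj : ∀ x ∈ (T.neighborFinset v).erase p, Disjoint (layer c x) (layer c p ∪ layer c v) :=
    fun x hx => by
      obtain ⟨hvx, hdx, hxp⟩ := hchild x hx
      exact Finset.disjoint_union_right.2
        ⟨hc.disjoint_layer_of_sharesColorWithSibling hs hpv hvx hxp
          (hT.not_adj_of_dist_add_two_eq (r := r) (by omega)), (hc.disjoint_layer_of_adj hvx).symm⟩
  have hcard : ((T.neighborFinset v).erase p).card = 3 := by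
    rw [Finset.card_erase_of_mem ((T.mem_neighborFinset v p).2 hpv.symm),
      T.card_neighborFinset_eq_degree, hdeg]
  obtain ⟨x, hx, x', hx', hxx', hshare⟩ := Finset.exists_ne_not_disjoint_of_card_lt
    (S := layer c) (fun x hx => (hrain x (hchild x hx).1).card_layer) hdisj
    (by rw [hcard, Finset.card_union_of_disjoint (hc.disjoint_layer_of_adj hpv),
      (hrain p hpv.symm).card_layer, hv.card_layer]; omega)
  exact ⟨x, (hchild x hx).1, (hchild x hx).2.1, x', (hchild x' hx').1, hxx'.symm, hshare⟩

/-- The layers of `u₀` and `u₃` both avoid those of `u₁` and `u₂`, which fill `2k` of the fewer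
than `4k` colors. -/
theorem exists_color_eq_of_descending (hc : IsNonrepetitive (lexProd T ⊥) c)
    (hT : T.IsTree) (hα : Fintype.card α < 4 * k) {r u₀ u₁ u₂ u₃ : V}
    (h₀₁ : T.Adj u₀ u₁) (h₁₂ : T.Adj u₁ u₂) (h₂₃ : T.Adj u₂ u₃)
    (hd₁ : T.dist r u₀ + 1 = T.dist r u₁) (hd₂ : T.dist r u₁ + 1 = T.dist r u₂)
    (hd₃ : T.dist r u₂ + 1 = T.dist r u₃)
    (hs₁ : SharesColorWithSibling T c u₀ u₁) (hs₂ : SharesColorWithSibling T c u₁ u₂)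
    (hr₀ : IsRainbowLayer c u₀) (hr₁ : IsRainbowLayer c u₁) (hr₂ : IsRainbowLayer c u₂)
    (hr₃ : IsRainbowLayer c u₃) : ∃ a b, c (u₀, a) = c (u₃, b) := by
  have h₂₀ := hc.disjoint_layer_of_sharesColorWithSibling hs₁ h₀₁ h₁₂ (by rintro rfl; omega)
    (hT.not_adj_of_dist_add_two_eq (r := r) (by omega))
  have h₃₁ := hc.disjoint_layer_of_sharesColorWithSibling hs₂ h₁₂ h₂₃ (by rintro rfl; omega)
    (hT.not_adj_of_dist_add_two_eq (r := r) (by omega))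
  have hshare := Finset.not_disjoint_of_card_lt (u := layer c u₁ ∪ layer c u₂)
    (Finset.disjoint_union_right.2 ⟨hc.disjoint_layer_of_adj h₀₁, h₂₀.symm⟩)
    (Finset.disjoint_union_right.2 ⟨h₃₁, (hc.disjoint_layer_of_adj h₂₃).symm⟩) (by
      rw [Finset.card_union_of_disjoint (hc.disjoint_layer_of_adj h₁₂), hr₀.card_layer,
        hr₁.card_layer, hr₂.card_layer, hr₃.card_layer]
      omega)
  obtain ⟨_, h₀, h₃⟩ := Finset.not_disjoint_iff.1 hshare
  obtain ⟨a, rfl⟩ := mem_layer.1 h₀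
  obtain ⟨b, hb⟩ := mem_layer.1 h₃
  exact ⟨a, b, hb.symm⟩

theorem false_of_descending_branch (hc : IsNonrepetitive (lexProd T ⊥) c) (hT : T.IsTree)
    (hα : Fintype.card α < 4 * k) {r v₁ v₂ v₃ v₄ v₅ : V}
    (hrain : ∀ v, T.dist r v < 6 → IsRainbowLayer c v)
    (h₀₁ : T.Adj r v₁) (h₁₂ : T.Adj v₁ v₂) (h₂₃ : T.Adj v₂ v₃) (h₃₄ : T.Adj v₃ v₄)
    (h₄₅ : T.Adj v₄ v₅) (hd₁ : T.dist r r + 1 = T.dist r v₁)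
    (hd₂ : T.dist r v₁ + 1 = T.dist r v₂) (hd₃ : T.dist r v₂ + 1 = T.dist r v₃)
    (hd₄ : T.dist r v₃ + 1 = T.dist r v₄) (hd₅ : T.dist r v₄ + 1 = T.dist r v₅)
    (hs₁ : SharesColorWithSibling T c r v₁) (hs₂ : SharesColorWithSibling T c v₁ v₂)
    (hs₃ : SharesColorWithSibling T c v₂ v₃) (hs₄ : SharesColorWithSibling T c v₃ v₄) :
    False := by
  have hd₀ : T.dist r r = 0 := SimpleGraph.dist_self
  obtain ⟨a₀, a₃, h₀₃⟩ := hc.exists_color_eq_of_descending hT hα h₀₁ h₁₂ h₂₃ hd₁ hd₂ hd₃ hs₁ hs₂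
    (hrain r (by omega)) (hrain v₁ (by omega)) (hrain v₂ (by omega)) (hrain v₃ (by omega))
  obtain ⟨a₁, a₄, h₁₄⟩ := hc.exists_color_eq_of_descending hT hα h₁₂ h₂₃ h₃₄ hd₂ hd₃ hd₄ hs₂ hs₃
    (hrain v₁ (by omega)) (hrain v₂ (by omega)) (hrain v₃ (by omega)) (hrain v₄ (by omega))
  obtain ⟨a₂, a₅, h₂₅⟩ := hc.exists_color_eq_of_descending hT hα h₂₃ h₃₄ h₄₅ hd₃ hd₄ hd₅ hs₃ hs₄
    (hrain v₂ (by omega)) (hrain v₃ (by omega)) (hrain v₄ (by omega)) (hrain v₅ (by omega))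
  refine hc.map_ne_map (p := [(r, a₀), (v₁, a₁), (v₂, a₂)]) (q := [(v₃, a₃), (v₄, a₄), (v₅, a₅)])
    (by simp) rfl ?_ (by simp [h₀₁, h₁₂, h₂₃, h₃₄, h₄₅]) (by simp [h₀₃, h₁₄, h₂₅])
  refine List.Nodup.of_map (fun x => T.dist r x.1) ?_
  simp only [List.cons_append, List.nil_append, List.map_cons, List.map_nil, ← hd₅, ← hd₄, ← hd₃,
    ← hd₂, ← hd₁, hd₀]
  decide

theorem four_mul_le_card [Fintype V] [DecidableEq V] [DecidableRel T.Adj]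
    (hc : IsNonrepetitive (lexProd T ⊥) c) (hT : T.IsTree) {r : V} (hroot : T.degree r = 4)
    (hinternal : ∀ v : V, v ≠ r → T.dist r v < 6 → T.degree v = 4) :
    4 * k ≤ Fintype.card α := by
  by_contra! hα
  have hdeg : ∀ v, T.dist r v < 6 → T.degree v = 4 := fun v hv => by
    by_cases hvr : v = r
    · exact hvr ▸ hroot
    · exact hinternal v hvr hv
  have hrain : ∀ v, T.dist r v < 6 → IsRainbowLayer c v := fun v hv =>
    hc.isRainbowLayer_of_card_lt (by rw [hdeg v hv]; omega)
  have hrain_adj : ∀ v, T.dist r v < 5 → ∀ x, T.Adj v x → IsRainbowLayer c x := fun v hv x hx =>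
    hrain x (by rcases hT.dist_eq_dist_add_one_of_adj r hx with h | h <;> omega)
  have step : ∀ p v, T.Adj p v → T.dist r p + 1 = T.dist r v → T.dist r v < 5 →
      SharesColorWithSibling T c p v →
      ∃ x, T.Adj v x ∧ T.dist r v + 1 = T.dist r x ∧ SharesColorWithSibling T c v x :=
    fun p v hpv hdv hv hs => hc.exists_adj_sharesColorWithSibling_of_parent hT hα hpv hdv hs
      (hdeg v (by omega)) (hrain v (by omega)) (hrain_adj v hv)
  have hd₀ : T.dist r r = 0 := SimpleGraph.dist_self
  obtain ⟨v₁, h₀₁, hs₁⟩ := hc.exists_adj_sharesColorWithSibling hα hroot (hrain r (by omega))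
    (hrain_adj r (by omega))
  have hd₁ : T.dist r r + 1 = T.dist r v₁ := by rw [hd₀, SimpleGraph.dist_eq_one_iff_adj.2 h₀₁]
  obtain ⟨v₂, h₁₂, hd₂, hs₂⟩ := step r v₁ h₀₁ hd₁ (by omega) hs₁
  obtain ⟨v₃, h₂₃, hd₃, hs₃⟩ := step v₁ v₂ h₁₂ hd₂ (by omega) hs₂
  obtain ⟨v₄, h₃₄, hd₄, hs₄⟩ := step v₂ v₃ h₂₃ hd₃ (by omega) hs₃
  obtain ⟨v₅, h₄₅, hd₅, -⟩ := step v₃ v₄ h₃₄ hd₄ (by omega) hs₄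
  exact hc.false_of_descending_branch hT hα hrain h₀₁ h₁₂ h₂₃ h₃₄ h₄₅ hd₁ hd₂ hd₃ hd₄ hd₅
    hs₁ hs₂ hs₃ hs₄

end IsNonrepetitive

theorem stmt_7_general {V : Type*} [Fintype V] (T : SimpleGraph V) [DecidableRel T.Adj]
    (r : V) (hT : T.IsTree)
    (hroot : T.degree r = 4)
    (hdepth : ∀ v : V, T.dist r v ≤ 6)
    (hinternal : ∀ v : V, v ≠ r → T.dist r v < 6 → T.degree v = 4)
    (k : ℕ) :
    thueNumber (lexProd T (⊥ : SimpleGraph (Fin k))) = 4 * k := by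
  classical
  have hupper : IsNonrepetitive (lexProd T ⊥) (finProdFinEquiv ∘ depthColoring T r k) :=
    (isNonrepetitive_depthColoring hT hdepth).comp_injective finProdFinEquiv.injective
  refine le_antisymm (Nat.sInf_le ⟨_, hupper⟩) (le_csInf ⟨_, _, hupper⟩ ?_)
  rintro n ⟨c, hc⟩
  simpa using hc.four_mul_le_card hT hroot hinternal

/-- For `T_{4,7}`, the tree whose root has 4 children, every other non-leaf vertex has
degree 4, and all leaves are at distance 6 from the root, `π(T_{4,7}[E_k]) = 4k`. -/
theorem stmt_7 {V : Type*} [Fintype V] (T : SimpleGraph V) [DecidableRel T.Adj]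
    (r : V) (hT : T.IsTree)
    (hroot : T.degree r = 4)
    (hdepth : ∀ v : V, T.dist r v ≤ 6)
    (hinternal : ∀ v : V, v ≠ r → T.dist r v < 6 → T.degree v = 4)
    (hleaf : ∀ v : V, T.dist r v = 6 → T.degree v = 1)
    (k : ℕ) (hk : 1 ≤ k) :
    thueNumber (lexProd T (⊥ : SimpleGraph (Fin k))) = 4 * k :=
  stmt_7_general T r hT hroot hdepth hinternal k
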